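/- Let (A, I) and (B, J) be pairs of a commutative ring and a principal ideal such that I·A_{I-tor} = 0 and J·B_{J-tor} = 0, let Φ : A/I → B/J be an injective ring homomorphism, and suppose there is a homomorphism of (possibly non-unital) rings Φ_tor : A_{I-tor} → B_{J-tor} with Φ ∘ φ_{I,A} = φ_{J,B} ∘ Φ_tor such that the commutative square with vertical arrows Φ_tor, Φ and horizontal arrows φ_{I,A}, φ_{J,B} is cartesian. Then Φ extends to an injective morphism of graded rings Φ• : gr_I(A) → gr_J(B). -/
import Mathlib


open Submodule

section Preamble

variable {A : Type*} [CommRing A]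

/-- The submodule of `I`-torsion elements: elements killed by a power of each element of `I`. -/
def Itor (I : Ideal A) (M : Type*) [AddCommGroup M] [Module A M] : Submodule A M where
  carrier := {x | ∀ a ∈ I, ∃ n : ℕ, a ^ n • x = 0}
  zero_mem' := fun a _ => ⟨1, smul_zero _⟩
  add_mem' := by
    rintro x y hx hy a ha
    obtain ⟨n, hn⟩ := hx a ha
    obtain ⟨m, hm⟩ := hy a ha
    refine ⟨n + m, ?_⟩
    have h1 : a ^ (n + m) • x = 0 := by
      rw [pow_add, mul_comm, mul_smul, hn, smul_zero]
    have h2 : a ^ (n + m) • y = 0 := by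
      rw [pow_add, mul_smul, hm, smul_zero]
    rw [smul_add, h1, h2, add_zero]
  smul_mem' := by
    rintro c x hx a ha
    obtain ⟨n, hn⟩ := hx a ha
    exact ⟨n, by rw [smul_comm, hn, smul_zero]⟩

lemma mem_pow_zero (I : Ideal A) (x : A) : x ∈ I ^ 0 := by
  simp [Ideal.one_eq_top]

lemma mul_mem_pow_add {I : Ideal A} {m n : ℕ} {x y : A}
    (hx : x ∈ I ^ m) (hy : y ∈ I ^ n) : x * y ∈ I ^ (m + n) := by
  rw [pow_add]; exact Ideal.mul_mem_mul hx hy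

/-- The `n`-th graded piece `Iⁿ/Iⁿ⁺¹` of the conormal cone of `(A, I)`. -/
abbrev GrPiece (I : Ideal A) (n : ℕ) :=
  (I ^ n : Ideal A) ⧸ (Submodule.comap (I ^ n : Ideal A).subtype (I ^ (n + 1) : Ideal A))

/-- Class of an element of `Iⁿ` in the graded piece `Iⁿ/Iⁿ⁺¹`. -/
def grMk (I : Ideal A) (n : ℕ) (x : A) (hx : x ∈ I ^ n) : GrPiece I n :=
  Submodule.Quotient.mk ⟨x, hx⟩

lemma grMk_eq_iff (I : Ideal A) (n : ℕ) {x y : A} (hx : x ∈ I ^ n) (hy : y ∈ I ^ n) :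
    grMk I n x hx = grMk I n y hy ↔ x - y ∈ I ^ (n + 1) := by
  rw [grMk, grMk, Submodule.Quotient.eq]
  rfl

/-- The map on graded pieces induced by a ring homomorphism `f` with `f(Iⁿ) ⊆ Jⁿ`. -/
def grMap {B : Type*} [CommRing B] (f : A →+* B) (I : Ideal A) (J : Ideal B)
    (hf : ∀ n, ∀ x ∈ I ^ n, f x ∈ J ^ n) (n : ℕ) :
    GrPiece I n → GrPiece J n := by
  refine Quotient.lift (fun x => grMk J n (f x.1) (hf n x.1 x.2)) ?_
  intro x y hxy
  rw [grMk_eq_iff]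
  have hxy0 : x - y ∈ Submodule.comap (I ^ n : Ideal A).subtype (I ^ (n + 1) : Ideal A) :=
    Submodule.quotientRel_def _ |>.mp hxy
  have hxy' : (x : A) - (y : A) ∈ I ^ (n + 1) := hxy0
  have := hf (n + 1) _ hxy'
  rwa [map_sub] at this

@[simp] lemma grMap_mk {B : Type*} [CommRing B] (f : A →+* B) (I : Ideal A) (J : Ideal B)
    (hf : ∀ n, ∀ x ∈ I ^ n, f x ∈ J ^ n) (n : ℕ) (x : A) (hx : x ∈ I ^ n) :
    grMap f I J hf n (grMk I n x hx) = grMk J n (f x) (hf n x hx) := rfl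


lemma gen_mem {I : Ideal A} {a : A} (h : I = Ideal.span {a}) : a ∈ I := by
  rw [h]; exact Ideal.mem_span_singleton_self a

lemma gen_mem_pow_one {I : Ideal A} {a : A} (h : I = Ideal.span {a}) : a ∈ I ^ 1 := by
  rw [pow_one]; exact gen_mem h

lemma mem_pow_one {I : Ideal A} {a : A} (ha : a ∈ I) : a ∈ I ^ 1 := by
  rwa [pow_one]

lemma mul_mem_Itor {I : Ideal A} {x y : A} (hy : y ∈ Itor I A) :
    x * y ∈ Itor I A := by
  simpa using (Itor I A).smul_mem x hy

/-- `g` is a morphism of graded rings `gr_I(A) → gr_J(B)` whose degree-0 component is `Φ`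
(under the canonical identifications `gr⁰_I(A) = A/I`, `gr⁰_J(B) = B/J`). -/
def IsGradedHom {B : Type*} [CommRing B] (I : Ideal A) (J : Ideal B)
    (Φ : A ⧸ I →+* B ⧸ J) (g : ∀ n, GrPiece I n →+ GrPiece J n) : Prop :=
  (∀ (x : A) (u : B), Φ (Ideal.Quotient.mk I x) = Ideal.Quotient.mk J u →
      g 0 (grMk I 0 x (mem_pow_zero I x)) = grMk J 0 u (mem_pow_zero J u)) ∧
  (∀ (m n : ℕ) (x y : A) (hx : x ∈ I ^ m) (hy : y ∈ I ^ n) (u v : B) (hu : u ∈ J ^ m)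
      (hv : v ∈ J ^ n),
      g m (grMk I m x hx) = grMk J m u hu →
      g n (grMk I n y hy) = grMk J n v hv →
      g (m + n) (grMk I (m + n) (x * y) (mul_mem_pow_add hx hy)) =
        grMk J (m + n) (u * v) (mul_mem_pow_add hu hv))

/-- `f : A_{I-tor} → B_{J-tor}` is a homomorphism of (possibly non-unital) rings such that
`Φ ∘ φ_{I,A} = φ_{J,B} ∘ f`. -/
def IsTorsionHom {B : Type*} [CommRing B] (I : Ideal A) (J : Ideal B)
    (Φ : A ⧸ I →+* B ⧸ J)
    (f : Itor I A → Itor J B) : Prop :=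
  (∀ x y, f (x + y) = f x + f y) ∧
  (∀ x y : Itor I A,
      f ⟨x.1 * y.1, mul_mem_Itor y.2⟩ = ⟨(f x).1 * (f y).1, mul_mem_Itor (f y).2⟩) ∧
  (∀ x : Itor I A,
      Φ (Ideal.Quotient.mk I x.1) = Ideal.Quotient.mk J (f x).1)

end Preamble

section Aux

variable {A : Type*} [CommRing A]

lemma grMk_congr (I : Ideal A) (n : ℕ) {x y : A} (h : x = y) (hx : x ∈ I ^ n) (hy : y ∈ I ^ n) :
    grMk I n x hx = grMk I n y hy := by subst h; rfl

lemma grMk_add (I : Ideal A) (n : ℕ) {x y : A} (hx : x ∈ I ^ n) (hy : y ∈ I ^ n) :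
    grMk I n x hx + grMk I n y hy = grMk I n (x + y) (add_mem hx hy) := rfl

lemma grMk_zero (I : Ideal A) (n : ℕ) : grMk I n 0 (zero_mem _) = 0 := rfl

/-- An element killed by `a ^ (k+1)` is `I`-torsion when `I = span {a}`. -/
lemma torsion_of_pow_mul_eq_zero {I : Ideal A} {a : A} (ha : I = Ideal.span {a})
    (k : ℕ) (s : A) (hs : s * a ^ (k + 1) = 0) : s ∈ Itor I A := by
  intro c hc
  rw [ha, Ideal.mem_span_singleton'] at hc
  obtain ⟨d, rfl⟩ := hc
  refine ⟨k + 1, ?_⟩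
  have : (d * a) ^ (k + 1) • s = d ^ (k + 1) * (s * a ^ (k + 1)) := by
    rw [smul_eq_mul]; ring
  rw [this, hs, mul_zero]

end Aux
/-- **Remark 2.4 (a).** If `Φ` is injective and the torsion square is cartesian, then the
graded extension can be taken to be injective. -/
theorem stmt5 {A B : Type*} [CommRing A] [CommRing B] (I : Ideal A) (J : Ideal B)
    (hIp : I.IsPrincipal) (hJp : J.IsPrincipal)
    (hItor : ∀ a ∈ I, ∀ x ∈ Itor I A, a * x = 0)
    (hJtor : ∀ b ∈ J, ∀ y ∈ Itor J B, b * y = 0)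
    (Φ : A ⧸ I →+* B ⧸ J) (hΦ : Function.Injective Φ)
    (f : Itor I A → Itor J B)
    (hf : IsTorsionHom I J Φ f)
    (hcart₁ : ∀ x y : Itor I A, f x = f y →
      Ideal.Quotient.mk I x.1 = Ideal.Quotient.mk I y.1 → x = y)
    (hcart₂ : ∀ (w : Itor J B) (q : A ⧸ I), Ideal.Quotient.mk J w.1 = Φ q →
      ∃ x : Itor I A, f x = w ∧ Ideal.Quotient.mk I x.1 = q) :
    ∃ g : ∀ n, GrPiece I n →+ GrPiece J n,
      IsGradedHom I J Φ g ∧ ∀ n, Function.Injective (g n) := by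
  classical
  obtain ⟨a, ha⟩ := hIp.principal
  obtain ⟨b, hb⟩ := hJp.principal
  have ha' : I = Ideal.span {a} := ha
  have hb' : J = Ideal.span {b} := hb
  -- basic facts about powers of principal ideals
  have hpowA : ∀ (n : ℕ) (z : A), z ∈ I ^ n → ∃ x : A, x * a ^ n = z := by
    intro n z hz
    rwa [ha', Ideal.span_singleton_pow, Ideal.mem_span_singleton'] at hz
  have hpowJ : ∀ (n : ℕ) (z : B), z ∈ J ^ n → ∃ u : B, u * b ^ n = z := by
    intro n z hz
    rwa [hb', Ideal.span_singleton_pow, Ideal.mem_span_singleton'] at hz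
  have hmulA : ∀ (n : ℕ) (x : A), x * a ^ n ∈ I ^ n := by
    intro n x
    rw [ha', Ideal.span_singleton_pow, Ideal.mem_span_singleton']
    exact ⟨x, rfl⟩
  have hmulJ : ∀ (n : ℕ) (u : B), u * b ^ n ∈ J ^ n := by
    intro n u
    rw [hb', Ideal.span_singleton_pow, Ideal.mem_span_singleton']
    exact ⟨u, rfl⟩
  have hkillA : ∀ (k : ℕ) (s : A), s ∈ Itor I A → s * a ^ (k + 1) = 0 := by
    intro k s hs
    have h0 : a * s = 0 := hItor a (gen_mem ha') s hs
    calc s * a ^ (k + 1) = (a * s) * a ^ k := by ring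
    _ = 0 := by rw [h0, zero_mul]
  have hkillB : ∀ (k : ℕ) (w : B), w ∈ Itor J B → w * b ^ (k + 1) = 0 := by
    intro k w hw
    have h0 : b * w = 0 := hJtor b (gen_mem hb') w hw
    calc w * b ^ (k + 1) = (b * w) * b ^ k := by ring
    _ = 0 := by rw [h0, zero_mul]
  -- choices
  choose xch hxch using hpowA
  have hpowA : ∀ (n : ℕ) (z : A), z ∈ I ^ n → ∃ x : A, x * a ^ n = z :=
    fun n z hz => ⟨xch n z hz, hxch n z hz⟩
  choose uch huch using fun q : A ⧸ I => Ideal.Quotient.mk_surjective (Φ q)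
  -- the main compatibility lemma
  have keyW : ∀ (n : ℕ) (x x' : A) (u u' : B),
      Ideal.Quotient.mk J u = Φ (Ideal.Quotient.mk I x) →
      Ideal.Quotient.mk J u' = Φ (Ideal.Quotient.mk I x') →
      x * a ^ n - x' * a ^ n ∈ I ^ (n + 1) →
      u * b ^ n - u' * b ^ n ∈ J ^ (n + 1) := by
    intro n x x' u u' hu hu' hmem
    obtain ⟨e, he⟩ := hpowA (n + 1) _ hmem
    have hdiff : (x - x' - e * a) * a ^ n = 0 := by
      have h9 : (x - x' - e * a) * a ^ n = (x * a ^ n - x' * a ^ n) - e * a ^ (n + 1) := by ring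
      rw [h9, ← he]; ring
    cases n with
    | zero =>
      have hxx : x - x' = e * a := by
        have h8 := hdiff
        rw [pow_zero, mul_one, sub_eq_zero] at h8
        exact h8
      have hxI : Ideal.Quotient.mk I x = Ideal.Quotient.mk I x' := by
        rw [Ideal.Quotient.eq, hxx]
        exact I.mul_mem_left e (gen_mem ha')
      have huu : Ideal.Quotient.mk J u = Ideal.Quotient.mk J u' := by
        rw [hu, hu', hxI]
      have h7 : u - u' ∈ J := Ideal.Quotient.eq.mp huu
      simpa using mem_pow_one h7
    | succ k =>
      have hs : x - x' - e * a ∈ Itor I A := torsion_of_pow_mul_eq_zero ha' k _ hdiff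
      have hΦs := hf.2.2 ⟨x - x' - e * a, hs⟩
      set w := (f ⟨x - x' - e * a, hs⟩).1 with hwdef
      have hwt : w ∈ Itor J B := (f ⟨x - x' - e * a, hs⟩).2
      have h1 : Ideal.Quotient.mk J (u - u') = Ideal.Quotient.mk J w := by
        have hx2 : Ideal.Quotient.mk I (x - x') = Ideal.Quotient.mk I (x - x' - e * a) := by
          rw [Ideal.Quotient.eq]
          have h6 : x - x' - (x - x' - e * a) = e * a := by ring
          rw [h6]
          exact I.mul_mem_left e (gen_mem ha')
        rw [map_sub, hu, hu', ← map_sub Φ, ← map_sub (Ideal.Quotient.mk I), hx2, hΦs]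
      have h2 : u - u' - w ∈ J := Ideal.Quotient.eq.mp h1
      rw [hb', Ideal.mem_span_singleton'] at h2
      obtain ⟨r, hr⟩ := h2
      have h3 : (u - u') * b ^ (k + 1) = r * b ^ (k + 2) := by
        have huu : u - u' = w + r * b := by rw [hr]; ring
        rw [huu, add_mul, hkillB k w hwt, zero_add]; ring
      have h4 : u * b ^ (k + 1) - u' * b ^ (k + 1) = r * b ^ (k + 2) := by
        rw [← h3]; ring
      rw [h4]
      exact hmulJ (k + 2) r
  -- the underlying function on graded pieces
  have hwd : ∀ (n : ℕ) (z z' : (I ^ n : Ideal A)),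
      (z : A) - (z' : A) ∈ (I ^ (n + 1) : Ideal A) →
      grMk J n (uch (Ideal.Quotient.mk I (xch n z.1 z.2)) * b ^ n) (hmulJ n _) =
      grMk J n (uch (Ideal.Quotient.mk I (xch n z'.1 z'.2)) * b ^ n) (hmulJ n _) := by
    intro n z z' hmem
    rw [grMk_eq_iff]
    refine keyW n (xch n z.1 z.2) (xch n z'.1 z'.2) _ _ (huch _) (huch _) ?_
    rw [hxch n z.1 z.2, hxch n z'.1 z'.2]
    exact hmem
  let gfun : ∀ n, GrPiece I n → GrPiece J n := fun n =>
    Quotient.lift (fun z : (I ^ n : Ideal A) =>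
      grMk J n (uch (Ideal.Quotient.mk I (xch n z.1 z.2)) * b ^ n) (hmulJ n _))
      (by
        intro z z' h
        have h0 : z - z' ∈ Submodule.comap (I ^ n : Ideal A).subtype (I ^ (n + 1) : Ideal A) :=
          Submodule.quotientRel_def _ |>.mp h
        exact hwd n z z' h0)
  -- value of gfun on nice representatives
  have hval : ∀ (n : ℕ) (x : A) (u : B),
      Ideal.Quotient.mk J u = Φ (Ideal.Quotient.mk I x) →
      ∀ (hx : x * a ^ n ∈ I ^ n),
      gfun n (grMk I n (x * a ^ n) hx) = grMk J n (u * b ^ n) (hmulJ n u) := by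
    intro n x u hu hx
    have h0 : gfun n (grMk I n (x * a ^ n) hx) =
        grMk J n (uch (Ideal.Quotient.mk I (xch n (x * a ^ n) hx)) * b ^ n) (hmulJ n _) := rfl
    rw [h0, grMk_eq_iff]
    refine keyW n (xch n (x * a ^ n) hx) x _ u (huch _) hu ?_
    rw [hxch n (x * a ^ n) hx, sub_self]
    exact zero_mem _
  have gadd : ∀ n (p q : GrPiece I n), gfun n (p + q) = gfun n p + gfun n q := by
    intro n p q
    obtain ⟨z, rfl⟩ := Submodule.Quotient.mk_surjective _ p
    obtain ⟨z', rfl⟩ := Submodule.Quotient.mk_surjective _ q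
    set x := xch n z.1 z.2 with hxdef
    set x' := xch n z'.1 z'.2 with hxdef'
    have hx : x * a ^ n = z.1 := hxch n z.1 z.2
    have hx' : x' * a ^ n = z'.1 := hxch n z'.1 z'.2
    have e1 : (Submodule.Quotient.mk z : GrPiece I n) + Submodule.Quotient.mk z' =
        grMk I n ((x + x') * a ^ n) (hmulA n _) := by
      rw [← Submodule.Quotient.mk_add]
      show grMk I n (z + z').1 (z + z').2 = _
      exact grMk_congr I n (by rw [add_mul, hx, hx']; rfl) _ _
    have e2 : gfun n (Submodule.Quotient.mk z) = grMk J n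
        (uch (Ideal.Quotient.mk I x) * b ^ n) (hmulJ n _) := rfl
    have e3 : gfun n (Submodule.Quotient.mk z') = grMk J n
        (uch (Ideal.Quotient.mk I x') * b ^ n) (hmulJ n _) := rfl
    have hu : Ideal.Quotient.mk J (uch (Ideal.Quotient.mk I x) + uch (Ideal.Quotient.mk I x'))
        = Φ (Ideal.Quotient.mk I (x + x')) := by
      rw [map_add, map_add, map_add, huch, huch]
    rw [e1, hval n (x + x') _ hu, e2, e3, grMk_add]
    exact grMk_congr J n (by ring) _ _
  refine ⟨fun n => AddMonoidHom.mk' (gfun n) (gadd n), ⟨?_, ?_⟩, ?_⟩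
  · -- degree 0 compatibility
    intro x u hu
    have h1 : grMk I 0 x (mem_pow_zero I x) = grMk I 0 (x * a ^ 0) (hmulA 0 x) :=
      grMk_congr I 0 (by rw [pow_zero, mul_one]) _ _
    show gfun 0 (grMk I 0 x (mem_pow_zero I x)) = grMk J 0 u (mem_pow_zero J u)
    rw [h1, hval 0 x u hu.symm]
    exact grMk_congr J 0 (by rw [pow_zero, mul_one]) _ _
  · -- multiplicativity
    intro m n x y hx hy u v hu hv hgm hgn
    obtain ⟨x₀, hx₀⟩ := hpowA m x hx
    obtain ⟨y₀, hy₀⟩ := hpowA n y hy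
    set u₀ := uch (Ideal.Quotient.mk I x₀) with hu₀def
    set v₀ := uch (Ideal.Quotient.mk I y₀) with hv₀def
    have hu₀ : Ideal.Quotient.mk J u₀ = Φ (Ideal.Quotient.mk I x₀) := huch _
    have hv₀ : Ideal.Quotient.mk J v₀ = Φ (Ideal.Quotient.mk I y₀) := huch _
    have e1 : grMk I m x hx = grMk I m (x₀ * a ^ m) (hmulA m x₀) :=
      grMk_congr I m hx₀.symm _ _
    have e2 : grMk I n y hy = grMk I n (y₀ * a ^ n) (hmulA n y₀) :=
      grMk_congr I n hy₀.symm _ _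
    have hm1 : grMk J m (u₀ * b ^ m) (hmulJ m u₀) = grMk J m u hu := by
      rw [← hgm]
      show _ = gfun m (grMk I m x hx)
      rw [e1, hval m x₀ u₀ hu₀]
    have hn1 : grMk J n (v₀ * b ^ n) (hmulJ n v₀) = grMk J n v hv := by
      rw [← hgn]
      show _ = gfun n (grMk I n y hy)
      rw [e2, hval n y₀ v₀ hv₀]
    have hmm : u₀ * b ^ m - u ∈ J ^ (m + 1) := (grMk_eq_iff J m _ _).mp hm1
    have hnn : v₀ * b ^ n - v ∈ J ^ (n + 1) := (grMk_eq_iff J n _ _).mp hn1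
    have e3 : grMk I (m + n) (x * y) (mul_mem_pow_add hx hy)
        = grMk I (m + n) ((x₀ * y₀) * a ^ (m + n)) (hmulA (m + n) _) :=
      grMk_congr I (m + n) (by rw [← hx₀, ← hy₀, pow_add]; ring) _ _
    have huv : Ideal.Quotient.mk J (u₀ * v₀) = Φ (Ideal.Quotient.mk I (x₀ * y₀)) := by
      rw [map_mul, map_mul, map_mul, hu₀, hv₀]
    show gfun (m + n) (grMk I (m + n) (x * y) (mul_mem_pow_add hx hy)) = _
    rw [e3, hval (m + n) (x₀ * y₀) (u₀ * v₀) huv, grMk_eq_iff]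
    have hterm1 : (u₀ * b ^ m - u) * (v₀ * b ^ n) ∈ J ^ (m + n + 1) := by
      have h5 := mul_mem_pow_add hmm (hmulJ n v₀)
      rwa [show m + 1 + n = m + n + 1 by omega] at h5
    have hterm2 : u * (v₀ * b ^ n - v) ∈ J ^ (m + n + 1) := by
      have h5 := mul_mem_pow_add hu hnn
      rwa [show m + (n + 1) = m + n + 1 by omega] at h5
    have h6 : (u₀ * v₀) * b ^ (m + n) - u * v
        = (u₀ * b ^ m - u) * (v₀ * b ^ n) + u * (v₀ * b ^ n - v) := by
      rw [pow_add]; ring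
    rw [h6]
    exact add_mem hterm1 hterm2
  · -- injectivity
    intro n
    rw [injective_iff_map_eq_zero]
    intro p hp
    obtain ⟨z, rfl⟩ := Submodule.Quotient.mk_surjective _ p
    set x₀ := xch n z.1 z.2 with hx₀def
    have hx₀ : x₀ * a ^ n = z.1 := hxch n z.1 z.2
    set u₀ := uch (Ideal.Quotient.mk I x₀) with hu₀def
    have hu₀ : Ideal.Quotient.mk J u₀ = Φ (Ideal.Quotient.mk I x₀) := huch _
    have hp' : grMk J n (u₀ * b ^ n) (hmulJ n u₀) = grMk J n 0 (zero_mem _) := by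
      rw [grMk_zero]
      exact hp
    have hmem : u₀ * b ^ n ∈ J ^ (n + 1) := by
      have h5 := (grMk_eq_iff J n _ _).mp hp'
      rwa [sub_zero] at h5
    have hfin : z.1 ∈ (I ^ (n + 1) : Ideal A) := by
      cases n with
      | zero =>
        have hu0J : u₀ ∈ J := by
          have h5 := hmem
          rwa [pow_zero, mul_one, pow_one] at h5
        have h0 : Φ (Ideal.Quotient.mk I x₀) = 0 := by
          rw [← hu₀, Ideal.Quotient.eq_zero_iff_mem]
          exact hu0J
        have hx0I : x₀ ∈ I := by
          rw [← Ideal.Quotient.eq_zero_iff_mem]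
          exact hΦ (by rw [h0, map_zero])
        rw [← hx₀, pow_zero, mul_one, pow_one]
        exact hx0I
      | succ k =>
        obtain ⟨t, ht⟩ := hpowJ (k + 2) _ hmem
        have hw0 : (u₀ - t * b) * b ^ (k + 1) = 0 := by
          have h5 : (u₀ - t * b) * b ^ (k + 1) = u₀ * b ^ (k + 1) - t * b ^ (k + 2) := by ring
          rw [h5, ht, sub_self]
        have hwt : u₀ - t * b ∈ Itor J B := by
          intro c hc
          rw [hb', Ideal.mem_span_singleton'] at hc
          obtain ⟨d, rfl⟩ := hc
          refine ⟨k + 1, ?_⟩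
          have h5 : (d * b) ^ (k + 1) • (u₀ - t * b)
              = d ^ (k + 1) * ((u₀ - t * b) * b ^ (k + 1)) := by
            rw [smul_eq_mul]; ring
          rw [h5, hw0, mul_zero]
        have hwq : Ideal.Quotient.mk J (u₀ - t * b) = Φ (Ideal.Quotient.mk I x₀) := by
          rw [← hu₀, Ideal.Quotient.eq]
          have h5 : u₀ - t * b - u₀ = -(t * b) := by ring
          rw [h5]
          exact neg_mem (J.mul_mem_left t (gen_mem hb'))
        obtain ⟨s, hfs, hs⟩ := hcart₂ ⟨u₀ - t * b, hwt⟩ (Ideal.Quotient.mk I x₀) hwq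
        have hsx : x₀ - s.1 ∈ I := by
          have h5 : s.1 - x₀ ∈ I := Ideal.Quotient.eq.mp hs
          have h6 := neg_mem h5
          rwa [neg_sub] at h6
        obtain ⟨e, he⟩ := hpowA 1 (x₀ - s.1) (by rwa [pow_one])
        rw [pow_one] at he
        have hz1 : z.1 = e * a ^ (k + 2) := by
          have hx0eq : x₀ = s.1 + e * a := by rw [he]; ring
          have h5 : z.1 = (s.1 + e * a) * a ^ (k + 1) := by rw [← hx₀, ← hx0eq]
          rw [h5, add_mul, hkillA k s.1 s.2, zero_add]; ring
        rw [hz1]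
        exact hmulA (k + 2) e
    exact (Submodule.Quotient.mk_eq_zero _).mpr hfin
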